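/- Let λ, c > 0. Define f : ℝ³ × (0,∞) → ℝ on the open cone {(x,t) : ‖x‖ < ct, t > 0} by f(x,t) = I₁((λ/c)√(c²t² − ‖x‖²)) / √(c²t² − ‖x‖²). Then f satisfies the fourth-order Klein–Gordon-type equation (∂²/∂t² − c²Δ)² f = λ⁴ f on the open cone, where Δ = Σ_{j=1}^3 ∂²/∂x_j² and (∂²/∂t² − c²Δ)² denotes the twofold iterate of the operator ∂²/∂t² − c²Δ. (The function f equals, up to the factor (2c/λ)² π sinh(λt), the absolutely continuous density of the random flight X₃(t).) -/

import Mathlib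

/-!
Write `I₁(z) = (z/2) g(z²/4)` with the entire series `g(w) = Σ wᵏ / (k! (k+1)!)`. On the cone
`f = (λ/2c) g(μ Q)` with `Q = c²t² - ‖x‖²` and `μ = λ²/4c²`. The coefficient recurrence
`(k+1)(k+2) gₖ₊₁ = gₖ` says `w g'' + 2 g' = g`, and for any solution `G` of this equation the chain
rule gives `□ G(μ Q) = 4μc² (μQ G''(μQ) + 2 G'(μQ)) = λ² G(μ Q)`: the time derivative contributes
`2μc² G'` and the three space derivatives `6μc² G'`. Since `□` is local and the cone is open,
`□ f = λ² f` there (`□ = dAlembert3 c`), and applying this twice gives `λ⁴`.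
-/

open Real

noncomputable def besselI1 (x : ℝ) : ℝ :=
  ∑' k : ℕ, (x / 2) ^ (2 * k + 1) / ((k.factorial : ℝ) * ((k + 1).factorial : ℝ))

noncomputable def dAlembert3 (c : ℝ)
    (u : EuclideanSpace ℝ (Fin 3) × ℝ → ℝ) :
    EuclideanSpace ℝ (Fin 3) × ℝ → ℝ :=
  fun p =>
    iteratedDeriv 2 (fun s => u (p.1, s)) p.2
      - c ^ 2 * ∑ j : Fin 3,
          iteratedDeriv 2 (fun s => u (WithLp.toLp 2 (Function.update p.1 j s), p.2)) (p.1 j)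

open Filter Topology
open scoped Nat

namespace FormalMultilinearSeries

variable {b : ℕ → ℝ} {C s : ℝ}

def derivCoeff (b : ℕ → ℝ) (k : ℕ) : ℝ := (k + 1) * b (k + 1)

lemma ofScalarsSum_real_eq (b : ℕ → ℝ) (x : ℝ) :
    ofScalarsSum b x = ∑' k, b k * x ^ k := by
  simp only [ofScalars_sum_eq, smul_eq_mul]

lemma abs_derivCoeff_le (hb : ∀ k, |b k| ≤ C * s ^ k / k !) (k : ℕ) :
    |derivCoeff b k| ≤ C * s * s ^ k / k ! := by
  have hk : (0 : ℝ) < k + 1 := by positivity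
  calc |derivCoeff b k| = (k + 1) * |b (k + 1)| := by
        rw [derivCoeff, abs_mul, abs_of_pos hk]
    _ ≤ (k + 1) * (C * s ^ (k + 1) / (k + 1)!) := by gcongr; exact hb _
    _ = C * s * s ^ k / k ! := by
        rw [Nat.factorial_succ]; push_cast; field_simp; ring

lemma summable_mul_pow_of_abs_le (hb : ∀ k, |b k| ≤ C * s ^ k / k !) (x : ℝ) :
    Summable fun k => b k * x ^ k := by
  refine Summable.of_norm_bounded ((summable_pow_div_factorial (s * |x|)).mul_left C) fun k => ?_
  rw [Real.norm_eq_abs, abs_mul, abs_pow, mul_pow, ← mul_div_assoc, mul_div_right_comm,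
    ← mul_assoc]
  exact mul_le_mul_of_nonneg_right (by simpa [mul_div_right_comm] using hb k) (by positivity)

theorem hasDerivAt_ofScalarsSum (hb : ∀ k, |b k| ≤ C * s ^ k / k !) (x : ℝ) :
    HasDerivAt (ofScalarsSum b) (ofScalarsSum (derivCoeff b) x) x := by
  have hsplit : ofScalarsSum b = fun y => b 0 + ∑' k, b (k + 1) * y ^ (k + 1) := by
    ext y
    rw [ofScalarsSum_real_eq, (summable_mul_pow_of_abs_le hb y).tsum_eq_zero_add, pow_zero, mul_one]
  set R := |x| + 1
  have hbound : ∀ k, ∀ y ∈ Metric.ball (0 : ℝ) R,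
      ‖derivCoeff b k * y ^ k‖ ≤ C * s * ((s * R) ^ k / k !) := by
    intro k y hy
    rw [mem_ball_zero_iff, Real.norm_eq_abs] at hy
    have hd := abs_derivCoeff_le hb k
    calc ‖derivCoeff b k * y ^ k‖ = |derivCoeff b k| * |y| ^ k := by
          rw [Real.norm_eq_abs, abs_mul, abs_pow]
      _ ≤ C * s * s ^ k / k ! * R ^ k := by
          gcongr
          exact (abs_nonneg _).trans hd
      _ = C * s * ((s * R) ^ k / k !) := by rw [mul_pow]; ring
  rw [hsplit, ofScalarsSum_real_eq]
  refine .const_add _ (hasDerivAt_tsum_of_isPreconnected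
    ((summable_pow_div_factorial (s * R)).mul_left (C * s)) Metric.isOpen_ball
    (convex_ball (0 : ℝ) R).isPreconnected (fun k y _ => ?_) hbound
    (Metric.mem_ball_self (by positivity)) (by simp) (by simp [R]))
  simpa [derivCoeff, mul_comm, mul_left_comm, mul_assoc] using
    (hasDerivAt_pow (k + 1) y).const_mul (b (k + 1))

theorem mul_ofScalarsSum_derivCoeff_derivCoeff_add (hb : ∀ k, |b k| ≤ C * s ^ k / k !)
    (hrec : ∀ k : ℕ, (k + 1) * (k + 2) * b (k + 1) = b k) (x : ℝ) :
    x * ofScalarsSum (derivCoeff (derivCoeff b)) x + 2 * ofScalarsSum (derivCoeff b) x =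
      ofScalarsSum b x := by
  have hb' := abs_derivCoeff_le hb
  have hb'' := abs_derivCoeff_le hb'
  have hsum' := summable_mul_pow_of_abs_le hb' x
  have hsum_shift : Summable fun k : ℕ => k * derivCoeff b k * x ^ k := by
    refine (summable_nat_add_iff 1).mp (((summable_mul_pow_of_abs_le hb'' x).mul_right x).congr
      fun k => ?_)
    simp only [derivCoeff]; push_cast; ring
  have hshift : x * ofScalarsSum (derivCoeff (derivCoeff b)) x =
      ∑' k : ℕ, k * derivCoeff b k * x ^ k := by
    rw [hsum_shift.tsum_eq_zero_add, ofScalarsSum_real_eq, ← tsum_mul_left]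
    simp only [derivCoeff]; push_cast
    simp only [zero_mul, zero_add]
    exact tsum_congr fun k => by ring
  rw [hshift, ofScalarsSum_real_eq, ofScalarsSum_real_eq, ← tsum_mul_left,
    ← hsum_shift.tsum_add (hsum'.mul_left 2)]
  refine tsum_congr fun k => ?_
  rw [← hrec k, derivCoeff]
  ring

end FormalMultilinearSeries

lemma iteratedDeriv_two_comp_quadratic {G G' G'' q : ℝ → ℝ} (hG : ∀ w, HasDerivAt G (G' w) w)
    (hG' : ∀ w, HasDerivAt G' (G'' w) w) {a b : ℝ} (hq : ∀ s, q s = a * s ^ 2 + b) (t : ℝ) :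
    iteratedDeriv 2 (fun s => G (q s)) t = G'' (q t) * (2 * a * t) ^ 2 + G' (q t) * (2 * a) := by
  obtain rfl : q = fun s => a * s ^ 2 + b := funext hq
  have hquad : ∀ s : ℝ, HasDerivAt (fun s => a * s ^ 2 + b) (2 * a * s) s := fun s => by
    simpa [mul_comm, mul_left_comm, mul_assoc] using ((hasDerivAt_pow 2 s).const_mul a).add_const b
  have hderiv : deriv (fun s => G (a * s ^ 2 + b)) = fun s => G' (a * s ^ 2 + b) * (2 * a * s) :=
    funext fun s => ((hG _).comp s (hquad s)).deriv
  rw [iteratedDeriv_succ, iteratedDeriv_one, hderiv]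
  refine (((hG' _).comp t (hquad t)).mul ((hasDerivAt_id' t).const_mul (2 * a))).deriv.trans ?_
  simp only [Function.comp_apply]
  ring

lemma EuclideanSpace.norm_toLp_update_sq {ι : Type*} [Fintype ι] [DecidableEq ι]
    (x : EuclideanSpace ℝ ι) (j : ι) (s : ℝ) :
    ‖WithLp.toLp 2 (Function.update x j s)‖ ^ 2 = ‖x‖ ^ 2 - x j ^ 2 + s ^ 2 := by
  simp only [EuclideanSpace.real_norm_sq_eq]
  rw [← Finset.add_sum_erase _ _ (Finset.mem_univ j),
    ← Finset.add_sum_erase _ _ (Finset.mem_univ j),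
    Finset.sum_congr rfl fun i hi => by rw [Function.update_of_ne (Finset.ne_of_mem_erase hi)]]
  simp only [Function.update_self]
  ring

lemma dAlembert3_congr_of_eventuallyEq {c : ℝ} {g₁ g₂ : EuclideanSpace ℝ (Fin 3) × ℝ → ℝ}
    {p : EuclideanSpace ℝ (Fin 3) × ℝ} (h : g₁ =ᶠ[𝓝 p] g₂) :
    dAlembert3 c g₁ p = dAlembert3 c g₂ p := by
  have htime : Tendsto (fun s => (p.1, s)) (𝓝 p.2) (𝓝 p) := by
    simpa using (Continuous.prodMk_right p.1).tendsto p.2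
  have hspace : ∀ j, Tendsto (fun s => (WithLp.toLp 2 (Function.update p.1 j s), p.2))
      (𝓝 (p.1 j)) (𝓝 p) := fun j => by
    have : Continuous fun s => (WithLp.toLp 2 (Function.update p.1 j s), p.2) := by fun_prop
    simpa using this.tendsto (p.1 j)
  unfold dAlembert3
  congr 1
  · exact (h.comp_tendsto htime).iteratedDeriv_eq 2
  congr 1
  exact Finset.sum_congr rfl fun j _ => (h.comp_tendsto (hspace j)).iteratedDeriv_eq 2

theorem dAlembert3_comp_lorentz {G G' G'' : ℝ → ℝ} (hG : ∀ w, HasDerivAt G (G' w) w)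
    (hG' : ∀ w, HasDerivAt G' (G'' w) w) (hode : ∀ w, w * G'' w + 2 * G' w = G w) (c μ : ℝ) :
    dAlembert3 c (fun q => G (μ * (c ^ 2 * q.2 ^ 2 - ‖q.1‖ ^ 2))) =
      fun q => 4 * μ * c ^ 2 * G (μ * (c ^ 2 * q.2 ^ 2 - ‖q.1‖ ^ 2)) := by
  ext ⟨x, t⟩
  have htime := iteratedDeriv_two_comp_quadratic hG hG'
    (q := fun s => μ * (c ^ 2 * s ^ 2 - ‖x‖ ^ 2)) (a := μ * c ^ 2) (b := -(μ * ‖x‖ ^ 2))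
    (fun s => by ring) t
  have hspace : ∀ j, iteratedDeriv 2
      (fun s => G (μ * (c ^ 2 * t ^ 2 - ‖WithLp.toLp 2 (Function.update x j s)‖ ^ 2))) (x j) =
        G'' (μ * (c ^ 2 * t ^ 2 - ‖x‖ ^ 2)) * (2 * -μ * x j) ^ 2 +
          G' (μ * (c ^ 2 * t ^ 2 - ‖x‖ ^ 2)) * (2 * -μ) := fun j => by
    simpa only [Function.update_eq_self, WithLp.toLp_ofLp] using
      iteratedDeriv_two_comp_quadratic hG hG'
        (q := fun s => μ * (c ^ 2 * t ^ 2 - ‖WithLp.toLp 2 (Function.update x j s)‖ ^ 2))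
        (a := -μ) (b := μ * (c ^ 2 * t ^ 2 - ‖x‖ ^ 2 + x j ^ 2))
        (fun s => by rw [EuclideanSpace.norm_toLp_update_sq]; ring) (x j)
  have hnorm : ‖x‖ ^ 2 = x 0 ^ 2 + x 1 ^ 2 + x 2 ^ 2 := by
    rw [EuclideanSpace.real_norm_sq_eq, Fin.sum_univ_three]
  simp only [dAlembert3, htime, hspace, Fin.sum_univ_three]
  linear_combination (4 * μ * c ^ 2) * hode (μ * (c ^ 2 * t ^ 2 - ‖x‖ ^ 2)) +
    (4 * μ ^ 2 * c ^ 2 * G'' (μ * (c ^ 2 * t ^ 2 - ‖x‖ ^ 2))) * hnorm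

open FormalMultilinearSeries

noncomputable def besselI1Coeff (k : ℕ) : ℝ := 1 / (k ! * (k + 1)!)

lemma abs_besselI1Coeff_le (k : ℕ) : |besselI1Coeff k| ≤ 1 * 1 ^ k / k ! := by
  rw [besselI1Coeff, abs_of_nonneg (by positivity), one_pow, one_mul, one_div, one_div]
  exact inv_anti₀ (by positivity)
    (le_mul_of_one_le_right (by positivity) (Nat.one_le_cast.mpr (Nat.factorial_pos _)))

lemma besselI1Coeff_succ (k : ℕ) :
    (k + 1) * (k + 2) * besselI1Coeff (k + 1) = besselI1Coeff k := by
  simp only [besselI1Coeff, Nat.factorial_succ]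
  push_cast
  field_simp
  ring

-- `reducedBesselI1 w = I₁(2√w) / √w` for `w > 0`, extended to the entire function of `w`.
noncomputable def reducedBesselI1 : ℝ → ℝ := ofScalarsSum besselI1Coeff

lemma besselI1_eq_mul_reducedBesselI1 (z : ℝ) :
    besselI1 z = z / 2 * reducedBesselI1 ((z / 2) ^ 2) := by
  rw [reducedBesselI1, ofScalarsSum_real_eq, ← tsum_mul_left, besselI1]
  refine tsum_congr fun k => ?_
  rw [besselI1Coeff, pow_succ, pow_mul]
  ring

lemma besselI1_mul_sqrt_div_sqrt (a : ℝ) {u : ℝ} (hu : 0 < u) :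
    besselI1 (a * √u) / √u = a / 2 * reducedBesselI1 (a ^ 2 / 4 * u) := by
  have hsqrt : 0 < √u := Real.sqrt_pos.mpr hu
  rw [besselI1_eq_mul_reducedBesselI1, div_pow, mul_pow, Real.sq_sqrt hu.le]
  field_simp
  ring_nf

theorem dAlembert3_mul_reducedBesselI1 (α μ c : ℝ) :
    dAlembert3 c (fun q => α * reducedBesselI1 (μ * (c ^ 2 * q.2 ^ 2 - ‖q.1‖ ^ 2))) =
      fun q => 4 * μ * c ^ 2 * α * reducedBesselI1 (μ * (c ^ 2 * q.2 ^ 2 - ‖q.1‖ ^ 2)) := by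
  have hb := abs_besselI1Coeff_le
  unfold reducedBesselI1
  rw [dAlembert3_comp_lorentz (fun w => (hasDerivAt_ofScalarsSum hb w).const_mul α)
    (fun w => (hasDerivAt_ofScalarsSum (abs_derivCoeff_le hb) w).const_mul α)
    (fun w => by
      rw [← mul_ofScalarsSum_derivCoeff_derivCoeff_add hb besselI1Coeff_succ w]
      ring)]
  ext q
  ring

theorem statement4_general (lam c : ℝ)
    (f : EuclideanSpace ℝ (Fin 3) × ℝ → ℝ)
    (hf : ∀ (x : EuclideanSpace ℝ (Fin 3)) (t : ℝ), f (x, t) =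
      besselI1 (lam / c * Real.sqrt (c ^ 2 * t ^ 2 - ‖x‖ ^ 2)) /
        Real.sqrt (c ^ 2 * t ^ 2 - ‖x‖ ^ 2)) :
    ∀ (x : EuclideanSpace ℝ (Fin 3)) (t : ℝ), 0 < t → ‖x‖ < c * t →
      (dAlembert3 c)^[2] f (x, t) = lam ^ 4 * f (x, t) := by
  intro x t _ hxt
  have hc : c ≠ 0 := by
    rintro rfl
    exact (norm_nonneg x).not_gt (by simpa using hxt)
  let Φ : ℝ → EuclideanSpace ℝ (Fin 3) × ℝ → ℝ := fun α q =>
    α * reducedBesselI1 ((lam / c) ^ 2 / 4 * (c ^ 2 * q.2 ^ 2 - ‖q.1‖ ^ 2))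
  have hΦ : ∀ α, dAlembert3 c (Φ α) = Φ (lam ^ 2 * α) := fun α => by
    simp only [Φ, dAlembert3_mul_reducedBesselI1]
    ext q
    field_simp
  have hf_cone : ∀ q : EuclideanSpace ℝ (Fin 3) × ℝ, ‖q.1‖ < c * q.2 →
      f q = Φ (lam / c / 2) q := by
    rintro ⟨y, s⟩ hq
    have hu : 0 < c ^ 2 * s ^ 2 - ‖y‖ ^ 2 := by nlinarith [norm_nonneg y]
    rw [hf, besselI1_mul_sqrt_div_sqrt _ hu]
  have hcone : IsOpen {q : EuclideanSpace ℝ (Fin 3) × ℝ | ‖q.1‖ < c * q.2} :=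
    isOpen_lt (by fun_prop) (by fun_prop)
  have hWf : dAlembert3 c f =ᶠ[𝓝 (x, t)] Φ (lam ^ 2 * (lam / c / 2)) :=
    eventually_of_mem (hcone.mem_nhds hxt) fun q hq => by
      rw [dAlembert3_congr_of_eventuallyEq (eventually_of_mem (hcone.mem_nhds hq) hf_cone), hΦ]
  calc (dAlembert3 c)^[2] f (x, t) = dAlembert3 c (dAlembert3 c f) (x, t) := rfl
    _ = Φ (lam ^ 2 * (lam ^ 2 * (lam / c / 2))) (x, t) := by
      rw [dAlembert3_congr_of_eventuallyEq hWf, hΦ]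
    _ = lam ^ 4 * f (x, t) := by
      rw [hf_cone (x, t) hxt]
      simp only [Φ]
      ring

/-- the function
`f(x,t) = I₁((λ/c)√(c²t² - ‖x‖²)) / √(c²t² - ‖x‖²)` satisfies the fourth-order
Klein-Gordon-type equation `(∂²/∂t² - c²Δ)² f = λ⁴ f` on the open cone
`{(x,t) : ‖x‖ < ct, t > 0}`. -/
theorem statement4 (lam c : ℝ) (hlam : 0 < lam) (hc : 0 < c)
    (f : EuclideanSpace ℝ (Fin 3) × ℝ → ℝ)
    (hf : ∀ (x : EuclideanSpace ℝ (Fin 3)) (t : ℝ), f (x, t) =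
      besselI1 (lam / c * Real.sqrt (c ^ 2 * t ^ 2 - ‖x‖ ^ 2)) /
        Real.sqrt (c ^ 2 * t ^ 2 - ‖x‖ ^ 2)) :
    ∀ (x : EuclideanSpace ℝ (Fin 3)) (t : ℝ), 0 < t → ‖x‖ < c * t →
      (dAlembert3 c)^[2] f (x, t) = lam ^ 4 * f (x, t) :=
  statement4_general lam c f hf
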